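/- arXiv:1304.0988 — 5 statements merged into one kernel-verified Lean document; each statement's English description precedes it below -/
import Mathlib

section
/- For integers m ≥ 0 and n ≥ 0, the sum over 0 ≤ k < n of (k choose m) · H_k equals (n choose (m+1)) · (H_n − 1/(m+1)), where H_k denotes the k-th harmonic number. -/
/-! By induction on `n`: the sum grows by `C(n, m) H_n`, and Pascal's rule turns this into the
increment of the right-hand side once the absorption identity
`C(n+1, m+1) / (n+1) = C(n, m) / (m+1)` accounts for the new term `1/(n+1)` of `H_{n+1}`. -/

theorem Nat.cast_choose_succ_succ_div {K : Type*} [Field K] [CharZero K] (n m : ℕ) :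
    ((n + 1).choose (m + 1) : K) / (n + 1) = n.choose m / (m + 1) := by
  rw [div_eq_div_iff (Nat.cast_add_one_ne_zero n) (Nat.cast_add_one_ne_zero m)]
  rw [mul_comm (n.choose m : K)]
  exact_mod_cast (Nat.add_one_mul_choose_eq n m).symm

/-- For integers `m ≥ 0` and `n ≥ 0`,
`∑_{0 ≤ k < n} (k choose m) · H_k = (n choose (m+1)) · (H_n − 1/(m+1))`,
where `H_k` is the `k`-th harmonic number. -/
theorem sum_choose_mul_harmonic (m n : ℕ) :
    ∑ k ∈ Finset.range n, (k.choose m : ℚ) * harmonic k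
      = (n.choose (m + 1) : ℚ) * (harmonic n - 1 / (m + 1)) := by
  induction n with
  | zero => simp
  | succ n ih =>
    have absorption := Nat.cast_choose_succ_succ_div (K := ℚ) n m
    rw [Finset.sum_range_succ, ih, harmonic_succ]
    rw [Nat.choose_succ_succ' n m] at absorption ⊢
    push_cast at absorption ⊢
    linear_combination -absorption
end

section
/- Define a sequence C_n by C_n = 0 for n ≤ 1 and C_n = a·n + b + (6/(n(n−1)))·Σ_{k=0}^{n−2}(n−k−1)·C_k for n ≥ 2, where a, b are real constants with 2a+b interpreted as the value of the toll at n=2 (i.e., the toll function is exactly a·n+b for all n ≥ 2). Then C_n = (6/5)·a·(n+1)·(H_{n+1} − H_3) + (1/5)·(n+1)·((19/5)·a + 2(b−a)) + (a−b)/2 + ((5 choose 5)·R)/ (n choose 4) for suitable constant R, for all n ≥ 4; in particular C_n = (6/5)·a·n·ln n + ((19/25)a + (6/5)(aγ + (b−a)/3 − a·H_3))·n + O(log n) as n → ∞, where γ is the Euler–Mascheroni constant. -/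
/-!
Multiplying the recurrence by `n (n - 1)` turns its right-hand side into
`6 ∑_{k<n} (n - k - 1) C_k`, whose second difference is `6 C_n`. Hence the excess
`w_n = n (n - 1) (C_n - a n - b)` satisfies `w_{n+2} - 2 w_{n+1} + w_n = 6 C_n` for every `n`,
a recurrence that determines `C_{n+2}` from `C_n` and `C_{n+1}`. The closed form satisfies it as
well and agrees with `C` at `n = 4, 5`, so the two coincide from `4` on (the constant `R` is `0`).
The asymptotics follow from `H_n - log (n + 1) < γ < H_n - log n`, which gives
`H_{n+1} = log n + γ + O(1/n)`.
-/

open Filter Asymptotics Finset Real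

section TailWeightedSum

variable {R : Type*} [CommRing R]

def tailWeightedSum (f : ℕ → R) (n : ℕ) : R :=
  ∑ k ∈ range n, ((n : R) - k - 1) * f k

theorem sum_range_pred_eq_tailWeightedSum (f : ℕ → R) (n : ℕ) :
    ∑ k ∈ range (n - 1), ((n : R) - k - 1) * f k = tailWeightedSum f n := by
  rcases n with _ | m
  · simp [tailWeightedSum]
  · simp [tailWeightedSum, sum_range_succ]

theorem tailWeightedSum_succ_sub (f : ℕ → R) (n : ℕ) :
    tailWeightedSum f (n + 1) - tailWeightedSum f n = ∑ k ∈ range n, f k := by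
  simp only [tailWeightedSum, sum_range_succ, Nat.cast_succ, add_sub_cancel_left, sub_self,
    zero_mul, add_zero, ← sum_sub_distrib]
  exact sum_congr rfl fun k _ => by ring

theorem tailWeightedSum_second_diff (f : ℕ → R) (n : ℕ) :
    tailWeightedSum f (n + 2) - 2 * tailWeightedSum f (n + 1) + tailWeightedSum f n = f n := by
  have h₁ := tailWeightedSum_succ_sub f (n + 1)
  have h₀ := tailWeightedSum_succ_sub f n
  rw [sum_range_succ] at h₁
  linear_combination h₁ - h₀

end TailWeightedSum

section Recurrence

def DualPivotRecurrence (t C : ℕ → ℝ) : Prop :=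
  ∀ n : ℕ, 2 ≤ n → C n = t n + (6 / ((n : ℝ) * ((n : ℝ) - 1))) *
    ∑ k ∈ range (n - 1), ((n : ℝ) - (k : ℝ) - 1) * C k

variable {t C : ℕ → ℝ}

def dualPivotExcess (t u : ℕ → ℝ) (n : ℕ) : ℝ := (n : ℝ) * ((n : ℝ) - 1) * (u n - t n)

theorem dualPivotExcess_eq_tailWeightedSum (hrec : DualPivotRecurrence t C) (n : ℕ) :
    dualPivotExcess t C n = 6 * tailWeightedSum C n := by
  rcases lt_or_ge n 2 with hn | hn
  · interval_cases n <;> simp [dualPivotExcess, tailWeightedSum]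
  · have hn' : (2 : ℝ) ≤ n := by exact_mod_cast hn
    have hn₀ : (n : ℝ) ≠ 0 := by linarith
    have hn₁ : (n : ℝ) - 1 ≠ 0 := by linarith
    rw [dualPivotExcess, hrec n hn, sum_range_pred_eq_tailWeightedSum]
    field_simp
    ring

theorem dualPivotExcess_second_diff (hrec : DualPivotRecurrence t C) (m : ℕ) :
    dualPivotExcess t C (m + 2) - 2 * dualPivotExcess t C (m + 1) + dualPivotExcess t C m
      = 6 * C m := by
  simp only [dualPivotExcess_eq_tailWeightedSum hrec]
  linear_combination 6 * tailWeightedSum_second_diff C m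

theorem eq_of_dualPivotExcess_second_diff {u v : ℕ → ℝ} {N : ℕ}
    (hu : ∀ m, N ≤ m → dualPivotExcess t u (m + 2) - 2 * dualPivotExcess t u (m + 1)
      + dualPivotExcess t u m = 6 * u m)
    (hv : ∀ m, N ≤ m → dualPivotExcess t v (m + 2) - 2 * dualPivotExcess t v (m + 1)
      + dualPivotExcess t v m = 6 * v m)
    (hN : u N = v N) (hN₁ : u (N + 1) = v (N + 1)) :
    ∀ n, N ≤ n → u n = v n := by
  suffices h : ∀ n, N ≤ n → u n = v n ∧ u (n + 1) = v (n + 1) from fun n hn => (h n hn).1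
  intro n hn
  induction n, hn using Nat.le_induction with
  | base => exact ⟨hN, hN₁⟩
  | succ m hm ih =>
    refine ⟨ih.2, ?_⟩
    have hdiff : ((m : ℝ) + 2) * ((m : ℝ) + 1) * (u (m + 2) - v (m + 2)) = 0 := by
      have hum := hu m hm
      have hvm := hv m hm
      simp only [dualPivotExcess, ih.1, ih.2] at hum hvm
      push_cast at hum hvm
      linear_combination hum - hvm
    have hne : ((m : ℝ) + 2) * ((m : ℝ) + 1) ≠ 0 := by positivity
    exact sub_eq_zero.mp ((mul_eq_zero.mp hdiff).resolve_left hne)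

end Recurrence

noncomputable def dualPivotClosedForm (a b : ℝ) (n : ℕ) : ℝ :=
  (6 / 5) * a * ((n : ℝ) + 1) * ((harmonic (n + 1) : ℝ) - (harmonic 3 : ℝ))
    + (1 / 5) * ((n : ℝ) + 1) * ((19 / 5) * a + 2 * (b - a))
    + (a - b) / 2

theorem dualPivotClosedForm_second_diff (a b : ℝ) (m : ℕ) :
    dualPivotExcess (fun n => a * n + b) (dualPivotClosedForm a b) (m + 2)
      - 2 * dualPivotExcess (fun n => a * n + b) (dualPivotClosedForm a b) (m + 1)
      + dualPivotExcess (fun n => a * n + b) (dualPivotClosedForm a b) m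
      = 6 * dualPivotClosedForm a b m := by
  simp only [dualPivotExcess, dualPivotClosedForm, harmonic_succ]
  push_cast
  field_simp
  ring

theorem dualPivot_eq_closedForm {a b : ℝ} {C : ℕ → ℝ} (h0 : ∀ n : ℕ, n ≤ 1 → C n = 0)
    (hrec : DualPivotRecurrence (fun n => a * n + b) C) :
    ∀ n, 4 ≤ n → C n = dualPivotClosedForm a b n := by
  have hC := dualPivotExcess_second_diff hrec
  have h₀ := hC 0
  have h₁ := hC 1
  have h₂ := hC 2
  have h₃ := hC 3
  simp only [dualPivotExcess, h0 0 (by norm_num), h0 1 (by norm_num)] at h₀ h₁ h₂ h₃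
  norm_num at h₀ h₁ h₂ h₃
  have hC4 : C 4 = 5 * a + 3 / 2 * b := by linarith
  have hC5 : C 5 = 71 / 10 * a + 19 / 10 * b := by linarith
  refine eq_of_dualPivotExcess_second_diff (fun m _ => hC m)
    (fun m _ => dualPivotClosedForm_second_diff a b m) ?_ ?_
  · norm_num [hC4, dualPivotClosedForm, harmonic, sum_range_succ]
    ring
  · norm_num [hC5, dualPivotClosedForm, harmonic, sum_range_succ]
    ring

theorem harmonic_succ_sub_log_sub_eulerMascheroniConstant_mem_Icc {n : ℕ} (hn : 1 ≤ n) :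
    (harmonic (n + 1) : ℝ) - log n - eulerMascheroniConstant ∈ Set.Icc 0 (2 / (n : ℝ)) := by
  have hlt := eulerMascheroniConstant_lt_eulerMascheroniSeq' (n + 1)
  have hgt := eulerMascheroniSeq_lt_eulerMascheroniConstant n
  rw [eulerMascheroniSeq', if_neg n.succ_ne_zero, Nat.cast_succ] at hlt
  rw [eulerMascheroniSeq] at hgt
  have hn' : (1 : ℝ) ≤ n := by exact_mod_cast hn
  have hlog_mono : log n ≤ log (n + 1) := log_le_log (by positivity) (by linarith)
  have hlog_gap : log (n + 1) - log n ≤ 1 / n := by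
    rw [← log_div (by positivity) (by positivity)]
    calc log ((n + 1) / n) ≤ (n + 1) / n - 1 := log_le_sub_one_of_pos (by positivity)
      _ = 1 / n := by field_simp; ring
  have hinv : 1 / ((n : ℝ) + 1) ≤ 1 / n := one_div_le_one_div_of_le (by positivity) (by linarith)
  have hH : (harmonic (n + 1) : ℝ) = harmonic n + 1 / ((n : ℝ) + 1) := by
    rw [harmonic_succ]; push_cast; ring
  have htwo : (2 : ℝ) / n = 1 / n + 1 / n := by ring
  constructor <;> linarith

theorem isBigO_succ_mul_harmonic_succ_sub_log_sub_eulerMascheroniConstant :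
    (fun n : ℕ => ((n : ℝ) + 1) * ((harmonic (n + 1) : ℝ) - log n - eulerMascheroniConstant))
      =O[atTop] (fun _ => (1 : ℝ)) := by
  refine IsBigO.of_bound 4 ?_
  filter_upwards [eventually_ge_atTop 1] with n hn
  obtain ⟨hlo, hhi⟩ := harmonic_succ_sub_log_sub_eulerMascheroniConstant_mem_Icc hn
  have hn' : (1 : ℝ) ≤ n := by exact_mod_cast hn
  rw [norm_one, mul_one, norm_mul, Real.norm_of_nonneg (by positivity), Real.norm_of_nonneg hlo]
  calc ((n : ℝ) + 1) * _ ≤ ((n : ℝ) + 1) * (2 / n) := by gcongr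
    _ ≤ 4 := by rw [mul_div_assoc', div_le_iff₀ (by positivity)]; linarith

theorem dualPivotClosedForm_sub_isBigO_log (a b : ℝ) :
    (fun n : ℕ => dualPivotClosedForm a b n - ((6 / 5) * a * (n : ℝ) * log n
        + ((19 / 25) * a + (6 / 5) * (a * eulerMascheroniConstant
            + (b - a) / 3 - a * (harmonic 3 : ℝ))) * (n : ℝ)))
      =O[atTop] (fun n : ℕ => log n) := by
  have hconst (c : ℝ) : (fun _ : ℕ => c) =O[atTop] (fun n : ℕ => log n) :=
    (isLittleO_const_log_atTop.comp_tendsto tendsto_natCast_atTop_atTop).isBigO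
  have hharm := (isBigO_succ_mul_harmonic_succ_sub_log_sub_eulerMascheroniConstant.trans
    (hconst 1)).const_mul_left ((6 / 5) * a)
  have hlog := (isBigO_refl (fun n : ℕ => log n) atTop).const_mul_left ((6 / 5) * a)
  refine ((hharm.add hlog).add (hconst ((6 / 5) * a * (eulerMascheroniConstant - harmonic 3)
    + (1 / 5) * ((19 / 5) * a + 2 * (b - a)) + (a - b) / 2))).congr_left fun n => ?_
  simp only [dualPivotClosedForm]
  ring

/-- Dual-pivot Quicksort recurrence with cutoff `M = 1` and linear toll `a·n + b`
(valid for all `n ≥ 2`): exact closed form for `n ≥ 4` (with a suitable constant `R`),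
and the asymptotic expansion `C_n = (6/5)a·n ln n + (…)·n + O(log n)`. -/
theorem dual_pivot_recurrence_solution (a b : ℝ) (C : ℕ → ℝ)
    (h0 : ∀ n : ℕ, n ≤ 1 → C n = 0)
    (hrec : ∀ n : ℕ, 2 ≤ n →
      C n = a * (n : ℝ) + b + (6 / ((n : ℝ) * ((n : ℝ) - 1))) *
        ∑ k ∈ Finset.range (n - 1), ((n : ℝ) - (k : ℝ) - 1) * C k) :
    (∃ R : ℝ, ∀ n : ℕ, 4 ≤ n →
      C n = (6 / 5) * a * ((n : ℝ) + 1) *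
            (((harmonic (n + 1) : ℚ) : ℝ) - ((harmonic 3 : ℚ) : ℝ))
          + (1 / 5) * ((n : ℝ) + 1) * ((19 / 5) * a + 2 * (b - a))
          + (a - b) / 2
          + ((Nat.choose 5 5 : ℝ) * R) / (n.choose 4 : ℝ)) ∧
    (fun n : ℕ => C n - ((6 / 5) * a * (n : ℝ) * Real.log n
        + ((19 / 25) * a + (6 / 5) * (a * Real.eulerMascheroniConstant
            + (b - a) / 3 - a * ((harmonic 3 : ℚ) : ℝ))) * (n : ℝ)))
      =O[atTop] (fun n : ℕ => Real.log n) := by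
  have hclosed := dualPivot_eq_closedForm h0 hrec
  refine ⟨⟨0, fun n hn => by simp [hclosed n hn, dualPivotClosedForm]⟩, ?_⟩
  refine EventuallyEq.trans_isBigO ?_ (dualPivotClosedForm_sub_isBigO_log a b)
  filter_upwards [eventually_ge_atTop 4] with n hn
  rw [hclosed n hn]
end

section
/- Let (D_1, D_2, D_3) be uniform spacings on the 2-simplex (density 2). Then 2·E[(1 + (D_1+D_2)(D_2+2D_3) + (19/10)·Σ_{j=1}^3 D_j ln D_j)^2] = 2231/360 − (361/600)·π^2. -/
/-! With `x = 1 - s` and `y = s t` the three spacings are `1 - s`, `s t` and `s (1 - t)`. Since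
`negMulLog (s t) = t negMulLog s + s negMulLog t`, the entropy term splits as
`binEntropy s + s binEntropy t`, so on each such segment the integrand is the square of a quadratic
in `t` plus a multiple of `binEntropy t`. Both integrations then reduce to the moments
`∫ tᵏ binEntropy t` and to `∫ binEntropy²`; the only non-elementary ingredient is
`∫ negMulLog t negMulLog (1 - t) = 37/108 - π²/36`, obtained by expanding `log (1 - t)` in its
power series and summing with `ζ(2) = π²/6`. -/

open Real intervalIntegral Filter Topology Finset

lemma integral_pow_mul_negMulLog (k : ℕ) :
    ∫ t in (0:ℝ)..1, t ^ k * negMulLog t = 1 / ((k:ℝ) + 2) ^ 2 := by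
  have hk : (k:ℝ) + 2 ≠ 0 := by positivity
  rw [integral_eq_sub_of_hasDerivAt_of_le zero_le_one
    (f := fun t => t ^ (k + 1) * negMulLog t / (k + 2) + t ^ (k + 2) / (k + 2) ^ 2)
    (by fun_prop) (fun t ht => ?_) (by apply Continuous.intervalIntegrable; fun_prop)]
  · simp
  · refine ((((hasDerivAt_pow (k + 1) t).mul (hasDerivAt_negMulLog ht.1.ne')).div_const
      ((k:ℝ) + 2)).add ((hasDerivAt_pow (k + 2) t).div_const (((k:ℝ) + 2) ^ 2))).congr_deriv ?_
    simp only [negMulLog, Nat.cast_add, Nat.cast_ofNat, Nat.cast_one, Nat.add_sub_cancel,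
      show k + 2 - 1 = k + 1 by omega]
    field_simp
    ring

lemma integral_pow_mul_negMulLog_sq (k : ℕ) :
    ∫ t in (0:ℝ)..1, t ^ k * negMulLog t ^ 2 = 2 / ((k:ℝ) + 3) ^ 3 := by
  have hk : (k:ℝ) + 3 ≠ 0 := by positivity
  rw [integral_eq_sub_of_hasDerivAt_of_le zero_le_one
    (f := fun t => t ^ (k + 1) * negMulLog t ^ 2 / (k + 3)
      + 2 * t ^ (k + 2) * negMulLog t / (k + 3) ^ 2 + 2 * t ^ (k + 3) / (k + 3) ^ 3)
    (by fun_prop) (fun t ht => ?_) (by apply Continuous.intervalIntegrable; fun_prop)]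
  · simp
  · have hφ := hasDerivAt_negMulLog ht.1.ne'
    refine ((((hasDerivAt_pow (k + 1) t).mul (hφ.pow 2)).div_const ((k:ℝ) + 3)).add
      ((((hasDerivAt_pow (k + 2) t).const_mul 2).mul hφ).div_const (((k:ℝ) + 3) ^ 2))).add
      (((hasDerivAt_pow (k + 3) t).const_mul 2).div_const (((k:ℝ) + 3) ^ 3)) |>.congr_deriv ?_
    simp only [negMulLog, Pi.pow_apply, Nat.cast_add, Nat.cast_ofNat, Nat.cast_one,
      Nat.add_sub_cancel, show k + 2 - 1 = k + 1 by omega, show k + 3 - 1 = k + 2 by omega]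
    field_simp
    ring

lemma hasSum_sub_add_of_antitone {f : ℕ → ℝ} (hf : Antitone f) (h0 : Tendsto f atTop (𝓝 0))
    (k : ℕ) : HasSum (fun n => f n - f (n + k)) (∑ i ∈ range k, f i) := by
  refine (hasSum_iff_tendsto_nat_of_nonneg
    (fun n => sub_nonneg.2 (hf (Nat.le_add_right n k))) _).2 ?_
  have partial_sum : ∀ N, ∑ n ∈ range N, (f n - f (n + k))
      = ∑ i ∈ range k, f i - ∑ i ∈ range k, f (N + i) := by
    intro N
    have h1 := sum_range_add f N k
    have h2 := sum_range_add f k N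
    rw [add_comm k N] at h2
    simp only [sum_sub_distrib, add_comm k] at h2 ⊢
    linarith
  have tail : Tendsto (fun N => ∑ i ∈ range k, f (N + i)) atTop (𝓝 0) := by
    simpa using tendsto_finsetSum (range k) fun i _ => h0.comp (tendsto_add_atTop_nat i)
  simpa [partial_sum] using tendsto_const_nhds.sub tail

lemma hasSum_one_div_mul_sub_sq :
    HasSum (fun m : ℕ => 1 / ((m:ℝ) + 1) * (1 / ((m:ℝ) + 3) ^ 2 - 1 / ((m:ℝ) + 4) ^ 2))
      (37 / 108 - π ^ 2 / 36) := by
  have harmonic_tail (k : ℕ) := hasSum_sub_add_of_antitone (f := fun n : ℕ => 1 / ((n:ℝ) + 1))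
    (fun m n h => one_div_le_one_div_of_le (by positivity) (by simpa using h))
    tendsto_one_div_add_atTop_nhds_zero_nat k
  have zeta_tail (k : ℕ) : HasSum (fun n : ℕ => 1 / ((n + k : ℕ) : ℝ) ^ 2)
      (π ^ 2 / 6 - ∑ i ∈ range k, 1 / (i : ℝ) ^ 2) :=
    (hasSum_nat_add_iff' k).2 hasSum_zeta_two
  have h2 : HasSum (fun n : ℕ => 1 / ((n:ℝ) + 1) - 1 / ((n:ℝ) + 3)) (3 / 2) := by
    convert harmonic_tail 2 using 1
    · ext n; push_cast; ring
    · norm_num [Finset.sum_range_succ]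
  have h3 : HasSum (fun n : ℕ => 1 / ((n:ℝ) + 1) - 1 / ((n:ℝ) + 4)) (11 / 6) := by
    convert harmonic_tail 3 using 1
    · ext n; push_cast; ring
    · norm_num [Finset.sum_range_succ]
  have z3 : HasSum (fun n : ℕ => 1 / ((n:ℝ) + 3) ^ 2) (π ^ 2 / 6 - 5 / 4) := by
    convert zeta_tail 3 using 1
    · ext n; push_cast; ring
    · norm_num [Finset.sum_range_succ]
  have z4 : HasSum (fun n : ℕ => 1 / ((n:ℝ) + 4) ^ 2) (π ^ 2 / 6 - 49 / 36) := by
    convert zeta_tail 4 using 1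
    · ext n; push_cast; ring
    · norm_num [Finset.sum_range_succ]
  rw [show 37 / 108 - π ^ 2 / 36 = 1 / 4 * (3 / 2) - 1 / 9 * (11 / 6)
    - (1 / 2 * (π ^ 2 / 6 - 5 / 4) - 1 / 3 * (π ^ 2 / 6 - 49 / 36)) by ring]
  -- partial fractions
  refine (((h2.mul_left _).sub (h3.mul_left _)).sub ((z3.mul_left _).sub (z4.mul_left _))).congr_fun
    fun m => ?_
  field_simp
  ring

lemma integral_negMulLog_mul_negMulLog_one_sub :
    ∫ t in (0:ℝ)..1, negMulLog t * negMulLog (1 - t) = 37 / 108 - π ^ 2 / 36 := by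
  -- `negMulLog (1 - t) = (1 - t) ∑ₘ tᵐ⁺¹ / (m + 1)`, a series of nonnegative terms on `[0, 1]`
  set F : ℕ → ℝ → ℝ := fun m t => (t ^ (m + 1) - t ^ (m + 2)) * negMulLog t / (m + 1)
  have F_nonneg (m : ℕ) (t : ℝ) (ht : t ∈ Set.uIoc (0:ℝ) 1) : 0 ≤ F m t := by
    rw [Set.uIoc_of_le zero_le_one] at ht
    have : t ^ (m + 2) ≤ t ^ (m + 1) := pow_le_pow_of_le_one ht.1.le ht.2 (by omega)
    have := negMulLog_nonneg ht.1.le ht.2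
    positivity
  have F_hasSum (t : ℝ) (ht : t ∈ Set.uIoc (0:ℝ) 1) :
      HasSum (fun m => F m t) (negMulLog t * negMulLog (1 - t)) := by
    rw [Set.uIoc_of_le zero_le_one] at ht
    rcases ht.2.eq_or_lt with rfl | ht1
    · simp [F, hasSum_zero]
    · have log_series := hasSum_pow_div_log_of_abs_lt_one (abs_lt.2 ⟨by linarith [ht.1], ht1⟩)
      rw [show negMulLog t * negMulLog (1 - t) = (1 - t) * negMulLog t * -log (1 - t) by
        simp only [negMulLog]; ring]
      exact (log_series.mul_left _).congr_fun fun m => by simp only [F]; ring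
  have F_integral (m : ℕ) : ∫ t in (0:ℝ)..1, F m t
      = 1 / ((m:ℝ) + 1) * (1 / ((m:ℝ) + 3) ^ 2 - 1 / ((m:ℝ) + 4) ^ 2) := by
    simp only [F, sub_mul]
    rw [integral_div, integral_sub (by apply Continuous.intervalIntegrable; fun_prop)
      (by apply Continuous.intervalIntegrable; fun_prop), integral_pow_mul_negMulLog,
      integral_pow_mul_negMulLog]
    push_cast
    ring
  refine (hasSum_integral_of_dominated_convergence F
    (fun m => (by fun_prop : Continuous (F m)).aestronglyMeasurable)
    (fun m => MeasureTheory.ae_of_all _ fun t ht => (Real.norm_of_nonneg (F_nonneg m t ht)).le)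
    (MeasureTheory.ae_of_all _ fun t ht => (F_hasSum t ht).summable) ?_
    (MeasureTheory.ae_of_all _ F_hasSum)).unique (hasSum_one_div_mul_sub_sq.congr_fun F_integral)
  exact (by fun_prop : Continuous fun t => negMulLog t * negMulLog (1 - t)).intervalIntegrable 0 1
    |>.congr fun t ht => (F_hasSum t ht).tsum_eq.symm

lemma integral_pow_mul_binEntropy (k : ℕ) :
    ∫ t in (0:ℝ)..1, t ^ k * binEntropy t
      = 1 / ((k:ℝ) + 2) ^ 2 + ∑ j ∈ range (k + 1), (-1) ^ j * (k.choose j : ℝ) / ((j:ℝ) + 2) ^ 2 := by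
  have reflect : ∫ t in (0:ℝ)..1, t ^ k * negMulLog (1 - t)
      = ∫ t in (0:ℝ)..1, (1 - t) ^ k * negMulLog t := by
    simpa using integral_comp_sub_left (a := 0) (b := 1) (fun t => (1 - t) ^ k * negMulLog t) 1
  have binomial (t : ℝ) : (1 - t) ^ k * negMulLog t
      = ∑ j ∈ range (k + 1), (-1) ^ j * (k.choose j : ℝ) * (t ^ j * negMulLog t) := by
    rw [show 1 - t = -t + 1 by ring, add_pow, sum_mul]
    refine sum_congr rfl fun j _ => ?_
    rw [neg_pow]
    ring
  simp only [binEntropy_eq_negMulLog_add_negMulLog_one_sub, mul_add]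
  rw [integral_add (by apply Continuous.intervalIntegrable; fun_prop)
    (by apply Continuous.intervalIntegrable; fun_prop), reflect, integral_pow_mul_negMulLog]
  simp only [binomial]
  rw [integral_finsetSum fun j _ => by apply Continuous.intervalIntegrable; fun_prop]
  simp only [integral_const_mul, integral_pow_mul_negMulLog]
  congr 1
  refine sum_congr rfl fun j _ => ?_
  ring

lemma integral_binEntropy_sq : ∫ t in (0:ℝ)..1, binEntropy t ^ 2 = 5 / 6 - π ^ 2 / 18 := by
  have reflect : ∫ t in (0:ℝ)..1, negMulLog (1 - t) ^ 2 = ∫ t in (0:ℝ)..1, negMulLog t ^ 2 := by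
    simpa using integral_comp_sub_left (a := 0) (b := 1) (fun t => negMulLog t ^ 2) 1
  have square := integral_pow_mul_negMulLog_sq 0
  simp only [pow_zero, one_mul] at square
  simp only [binEntropy_eq_negMulLog_add_negMulLog_one_sub, add_sq]
  rw [integral_add (by apply Continuous.intervalIntegrable; fun_prop)
    (by apply Continuous.intervalIntegrable; fun_prop), integral_add
    (by apply Continuous.intervalIntegrable; fun_prop)
    (by apply Continuous.intervalIntegrable; fun_prop), reflect, square]
  simp only [mul_assoc, integral_const_mul, integral_negMulLog_mul_negMulLog_one_sub]
  norm_num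
  ring

lemma integral_mul_eq_half_of_symmetric {g : ℝ → ℝ}
    (hg : IntervalIntegrable g MeasureTheory.volume 0 1) (symm : ∀ t, g (1 - t) = g t) :
    ∫ t in (0:ℝ)..1, t * g t = (∫ t in (0:ℝ)..1, g t) / 2 := by
  have reflect : ∫ t in (0:ℝ)..1, (1 - t) * g t = ∫ t in (0:ℝ)..1, t * g t := by
    simpa [symm] using integral_comp_sub_left (a := 0) (b := 1) (fun t => t * g t) 1
  have sum : (∫ t in (0:ℝ)..1, t * g t) + ∫ t in (0:ℝ)..1, (1 - t) * g t
      = ∫ t in (0:ℝ)..1, g t := by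
    rw [← integral_add (hg.continuousOn_mul (by fun_prop)) (hg.continuousOn_mul (by fun_prop))]
    simp only [← add_mul, add_sub_cancel, one_mul]
  linarith

lemma integral_sq_quadratic_add_binEntropy (a b d e : ℝ) :
    ∫ t in (0:ℝ)..1, (a + b * t + d * t ^ 2 + e * binEntropy t) ^ 2
      = a ^ 2 + a * b + b ^ 2 / 3 + 2 * a * d / 3 + b * d / 2 + d ^ 2 / 5
        + a * e + b * e / 2 + 11 * d * e / 36 + (5 / 6 - π ^ 2 / 18) * e ^ 2 := by
  have expand (t : ℝ) : (a + b * t + d * t ^ 2 + e * binEntropy t) ^ 2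
      = a ^ 2 + 2 * a * b * t ^ 1 + (b ^ 2 + 2 * a * d) * t ^ 2 + 2 * b * d * t ^ 3 + d ^ 2 * t ^ 4
        + 2 * a * e * (t ^ 0 * binEntropy t) + 2 * b * e * (t ^ 1 * binEntropy t)
        + 2 * d * e * (t ^ 2 * binEntropy t) + e ^ 2 * binEntropy t ^ 2 := by
    ring
  simp only [expand]
  simp (disch := (apply Continuous.intervalIntegrable; fun_prop)) only [integral_add,
    integral_const_mul, integral_pow, integral_const, integral_pow_mul_binEntropy,
    integral_binEntropy_sq]
  norm_num [Finset.sum_range_succ]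
  ring

-- in the shape `(a + b t + d t² + e binEntropy t)²` of `integral_sq_quadratic_add_binEntropy`
noncomputable def sliceIntegrand (s t : ℝ) : ℝ :=
  (1 + 2 * s * (1 - s) - 19 / 10 * binEntropy s + s * (3 * s - 1) * t + -s ^ 2 * t ^ 2
    + -(19 / 10 * s) * binEntropy t) ^ 2

lemma integrand_eq_sliceIntegrand (x t : ℝ) :
    2 * (1 + (x + (1 - x) * t) * ((1 - x) * t + 2 * (1 - x - (1 - x) * t)) + 19 / 10 *
      (x * log x + (1 - x) * t * log ((1 - x) * t)
        + (1 - x - (1 - x) * t) * log (1 - x - (1 - x) * t))) ^ 2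
      = 2 * sliceIntegrand (1 - x) t := by
  have mul_log (u : ℝ) : u * log u = -negMulLog u := by simp [negMulLog]
  rw [show 1 - x - (1 - x) * t = (1 - x) * (1 - t) by ring, mul_log, mul_log, mul_log,
    negMulLog_mul, negMulLog_mul, sliceIntegrand, binEntropy_eq_negMulLog_add_negMulLog_one_sub,
    binEntropy_eq_negMulLog_add_negMulLog_one_sub, sub_sub_cancel]
  ring

lemma integral_inner_eq_sliceIntegrand (x : ℝ) :
    ∫ y in (0:ℝ)..(1 - x), 2 * (1 + (x + y) * (y + 2 * (1 - x - y)) +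
        (19 / 10) * (x * log x + y * log y + (1 - x - y) * log (1 - x - y))) ^ 2
      = 2 * ((1 - x) * ∫ t in (0:ℝ)..1, sliceIntegrand (1 - x) t) := by
  conv_lhs => rw [← mul_one (1 - x), ← mul_zero (1 - x), ← smul_integral_comp_mul_left]
  simp only [mul_one, smul_eq_mul, integrand_eq_sliceIntegrand, integral_const_mul]
  ring

lemma integral_mul_integral_sliceIntegrand :
    ∫ s in (0:ℝ)..1, s * ∫ t in (0:ℝ)..1, sliceIntegrand s t = 2231 / 1440 - 361 / 2400 * π ^ 2 := by
  have expand (s : ℝ) : s * ∫ t in (0:ℝ)..1, sliceIntegrand s t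
      = s ^ 1 + 11 / 10 * s ^ 2 + 33 / 40 * s ^ 3 - 469 / 360 * s ^ 4 + 31 / 30 * s ^ 5
        - 19 / 5 * (s ^ 1 * binEntropy s) - 209 / 100 * (s ^ 2 * binEntropy s)
        + 19 / 6 * (s ^ 3 * binEntropy s) + 361 / 100 * (s * binEntropy s ^ 2)
        - 361 / 1800 * π ^ 2 * s ^ 3 := by
    simp only [sliceIntegrand, integral_sq_quadratic_add_binEntropy]
    ring
  have symm := integral_mul_eq_half_of_symmetric (g := fun s => binEntropy s ^ 2)
    (by apply Continuous.intervalIntegrable; fun_prop) (by simp)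
  simp only [expand]
  simp (disch := (apply Continuous.intervalIntegrable; fun_prop)) only [integral_add,
    integral_sub, integral_const_mul, integral_pow, integral_pow_mul_binEntropy, symm,
    integral_binEntropy_sq]
  norm_num [Finset.sum_range_succ, Nat.choose]
  ring

/-- Second-moment integral for the comparisons toll of Yaroslavskiy's Quicksort:
`2·E[(1 + (D₁+D₂)(D₂+2D₃) + (19/10)·Σ Dⱼ ln Dⱼ)²] = 2231/360 − (361/600)π²`. -/
theorem comparisons_variance_constant :
    2 * (∫ x in (0:ℝ)..1, ∫ y in (0:ℝ)..(1 - x),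
        2 * (1 + (x + y) * (y + 2 * (1 - x - y)) +
            (19 / 10) * (x * Real.log x + y * Real.log y
              + (1 - x - y) * Real.log (1 - x - y))) ^ 2)
      = 2231 / 360 - (361 / 600) * Real.pi ^ 2 := by
  simp only [integral_inner_eq_sliceIntegrand]
  rw [integral_const_mul, integral_comp_sub_left (fun s => s * ∫ t in (0:ℝ)..1, sliceIntegrand s t)]
  norm_num [integral_mul_integral_sliceIntegrand]
  ring
end

section
/- Let (D_1, D_2, D_3) be uniform spacings on the 2-simplex. Then 2·E[(D_1 + (D_1+D_2)·D_3 + (3/5)·Σ_{j=1}^3 D_j ln D_j)^2] = 7/10 − (3/50)·π^2. -/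
/-!
With `t = 1 - x` and `z = t - y` the integrand is `2 (c + (1 - z) z + (3/5) (y ln y + z ln z))²`,
where `c = x + (3/5) x ln x`. The integral in `y` is elementary except for the cross term
`∫₀ᵗ y ln y · z ln z dy`, which the substitution `y = t v` reduces to `t³` times powers of `ln t`
and the constant `∫₀¹ v ln v · (1 - v) ln (1 - v) dv`. The outer integral then only involves the
moments `∫₀¹ xⁿ (x ln x)ʲ`, their reflections under `x ↦ 1 - x`, and
`∫₀¹ xⁿ (x ln x) (1 - x) ln (1 - x) dx`. Expanding `ln (1 - x) = -∑ x^(k+1) / (k+1)` turns the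
last ones into the series `∑ₖ 1 / ((k+1) (k+1+d)²) = H_d / d² - (ζ(2) - H_d⁽²⁾) / d`, summed by
partial fractions and telescoping; this is where `π²` comes from.
-/

open Real Filter Topology Finset intervalIntegral

theorem integral_pow_mul_mul_log (n : ℕ) {t : ℝ} (ht : 0 ≤ t) :
    ∫ u in (0:ℝ)..t, u ^ n * (u * log u) = t ^ (n + 2) * (log t / (n + 2) - 1 / (n + 2) ^ 2) := by
  rw [integral_eq_sub_of_hasDerivAt_of_le ht
    (f := fun u => u ^ (n + 2) * (log u / (n + 2) - 1 / (n + 2) ^ 2))]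
  · simp
  · have : (fun u : ℝ => u ^ (n + 2) * (log u / (n + 2) - 1 / (n + 2) ^ 2)) =
        fun u => u ^ (n + 1) * (u * log u) / (n + 2) - u ^ (n + 2) / (n + 2) ^ 2 := by
      ext u; ring
    rw [this]; fun_prop
  · intro u hu
    have hu0 := hu.1.ne'
    refine ((hasDerivAt_pow (n + 2) u).fun_mul
      (((hasDerivAt_log hu0).div_const _).sub_const _)).congr_deriv ?_
    field_simp
    push_cast
    ring
  · exact Continuous.intervalIntegrable (by fun_prop) _ _

theorem integral_pow_mul_mul_log_sq (n : ℕ) {t : ℝ} (ht : 0 ≤ t) :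
    ∫ u in (0:ℝ)..t, u ^ n * (u * log u) ^ 2 =
      t ^ (n + 3) * (log t ^ 2 / (n + 3) - 2 * log t / (n + 3) ^ 2 + 2 / (n + 3) ^ 3) := by
  rw [integral_eq_sub_of_hasDerivAt_of_le ht
    (f := fun u => u ^ (n + 3) * (log u ^ 2 / (n + 3) - 2 * log u / (n + 3) ^ 2 + 2 / (n + 3) ^ 3))]
  · simp
  · have : (fun u : ℝ =>
          u ^ (n + 3) * (log u ^ 2 / (n + 3) - 2 * log u / (n + 3) ^ 2 + 2 / (n + 3) ^ 3)) =
        fun u => u ^ (n + 1) * (u * log u) ^ 2 / (n + 3)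
          - 2 * u ^ (n + 2) * (u * log u) / (n + 3) ^ 2 + 2 * u ^ (n + 3) / (n + 3) ^ 3 := by
      ext u; ring
    rw [this]; fun_prop
  · intro u hu
    have hu0 := hu.1.ne'
    have hlog := hasDerivAt_log hu0
    refine ((hasDerivAt_pow (n + 3) u).fun_mul ((((hlog.fun_pow 2).div_const _).fun_sub
      ((hlog.const_mul 2).div_const _)).add_const _)).congr_deriv ?_
    field_simp
    push_cast
    ring
  · exact Continuous.intervalIntegrable (by fun_prop) _ _

theorem integral_sub_pow_mul_mul_log (n : ℕ) {t : ℝ} (ht : 0 ≤ t) :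
    ∫ u in (0:ℝ)..t, (t - u) ^ n * ((t - u) * log (t - u)) =
      t ^ (n + 2) * (log t / (n + 2) - 1 / (n + 2) ^ 2) := by
  have h := integral_comp_sub_left (a := 0) (b := t) (fun u => u ^ n * (u * log u)) t
  simp only [sub_self, sub_zero] at h
  rw [h, integral_pow_mul_mul_log n ht]

theorem integral_sub_pow_mul_mul_log_sq (n : ℕ) {t : ℝ} (ht : 0 ≤ t) :
    ∫ u in (0:ℝ)..t, (t - u) ^ n * ((t - u) * log (t - u)) ^ 2 =
      t ^ (n + 3) * (log t ^ 2 / (n + 3) - 2 * log t / (n + 3) ^ 2 + 2 / (n + 3) ^ 3) := by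
  have h := integral_comp_sub_left (a := 0) (b := t) (fun u => u ^ n * (u * log u) ^ 2) t
  simp only [sub_self, sub_zero] at h
  rw [h, integral_pow_mul_mul_log_sq n ht]

theorem Antitone.hasSum_sub_add {f : ℕ → ℝ} (hf : Antitone f) (hf0 : Tendsto f atTop (𝓝 0))
    (d : ℕ) : HasSum (fun k => f k - f (k + d)) (∑ i ∈ range d, f i) := by
  rw [hasSum_iff_tendsto_nat_of_nonneg fun k => sub_nonneg.2 (hf (Nat.le_add_right k d))]
  have partial_sum (N : ℕ) : ∑ k ∈ range N, (f k - f (k + d)) =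
      ∑ i ∈ range d, f i - ∑ i ∈ range d, f (N + i) := by
    have h₁ := sum_range_add f N d
    have h₂ := sum_range_add f d N
    rw [add_comm d N] at h₂
    simp only [sum_sub_distrib, add_comm _ d]
    linarith
  have tail : Tendsto (fun N => ∑ i ∈ range d, f (N + i)) atTop (𝓝 0) := by
    simpa using tendsto_finsetSum (range d) fun i _ => hf0.comp (tendsto_add_atTop_nat i)
  simpa [partial_sum] using tendsto_const_nhds.sub tail

theorem hasSum_one_div_add_sq (d : ℕ) :
    HasSum (fun k : ℕ => 1 / ((k : ℝ) + 1 + d) ^ 2)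
      (π ^ 2 / 6 - ∑ i ∈ range d, 1 / ((i : ℝ) + 1) ^ 2) := by
  have h := ((hasSum_nat_add_iff' (d + 1)).2 hasSum_zeta_two).congr_fun
    (g := fun k : ℕ => 1 / ((k : ℝ) + 1 + d) ^ 2) fun k => by push_cast; ring
  simpa [sum_range_succ'] using h

noncomputable def invMulSqSum (d : ℕ) : ℝ :=
  (∑ i ∈ range d, 1 / ((i : ℝ) + 1)) / d ^ 2
    - (π ^ 2 / 6 - ∑ i ∈ range d, 1 / ((i : ℝ) + 1) ^ 2) / d

theorem hasSum_one_div_mul_add_sq {d : ℕ} (hd : d ≠ 0) :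
    HasSum (fun k : ℕ => 1 / (((k : ℝ) + 1) * ((k : ℝ) + 1 + d) ^ 2)) (invMulSqSum d) := by
  have htel := Antitone.hasSum_sub_add (f := fun k : ℕ => 1 / ((k : ℝ) + 1))
    (fun _ _ h => Nat.one_div_le_one_div h) tendsto_one_div_add_atTop_nhds_zero_nat d
  have hd' : (d : ℝ) ≠ 0 := by exact_mod_cast hd
  exact ((htel.div_const ((d : ℝ) ^ 2)).sub ((hasSum_one_div_add_sq d).div_const d)).congr_fun
    fun k => by
      push_cast
      field_simp
      ring

theorem hasSum_one_sub_mul_pow_div {x : ℝ} (hx₀ : 0 ≤ x) (hx₁ : x ≤ 1) :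
    HasSum (fun k : ℕ => (1 - x) * (x ^ (k + 1) / (k + 1))) (-((1 - x) * log (1 - x))) := by
  rcases hx₁.lt_or_eq with hx₁ | rfl
  · rw [← mul_neg]
    exact (hasSum_pow_div_log_of_abs_lt_one (abs_lt.2 ⟨by linarith, hx₁⟩)).mul_left (1 - x)
  · simp [hasSum_zero]

theorem integral_pow_mul_mul_log_mul_one_sub_mul_log (n : ℕ) :
    ∫ x in (0:ℝ)..1, x ^ n * (x * log x) * ((1 - x) * log (1 - x)) =
      invMulSqSum (n + 2) - invMulSqSum (n + 3) := by
  -- `F k` is the `k`-th term of the integrand once `log (1 - x)` is expanded; it is nonnegative on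
  -- `[0, 1]`, so the series dominates itself.
  set F : ℕ → ℝ → ℝ := fun k x => (x ^ (n + k + 1) - x ^ (n + k + 2)) * -(x * log x) / (k + 1)
  have hF_cont (k : ℕ) : Continuous (F k) := by fun_prop
  have hF_nonneg (k : ℕ) {x : ℝ} (hx : x ∈ Set.Icc (0:ℝ) 1) : 0 ≤ F k x := by
    have hpow : x ^ (n + k + 2) ≤ x ^ (n + k + 1) := pow_le_pow_of_le_one hx.1 hx.2 (by omega)
    have hlog : x * log x ≤ 0 := mul_nonpos_of_nonneg_of_nonpos hx.1 (log_nonpos hx.1 hx.2)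
    exact div_nonneg (mul_nonneg (by linarith) (by linarith)) (by positivity)
  have hF_sum {x : ℝ} (hx : x ∈ Set.Icc (0:ℝ) 1) :
      HasSum (fun k => F k x) (x ^ n * (x * log x) * ((1 - x) * log (1 - x))) := by
    have h := ((hasSum_one_sub_mul_pow_div hx.1 hx.2).mul_left (-(x ^ n * (x * log x)))).congr_fun
      (g := fun k => F k x) fun k => by simp only [F]; ring
    rwa [neg_mul_neg] at h
  have hF_integral (k : ℕ) : ∫ x in (0:ℝ)..1, F k x =
      1 / (((k : ℝ) + 1) * ((k : ℝ) + 1 + (n + 2 : ℕ)) ^ 2)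
        - 1 / (((k : ℝ) + 1) * ((k : ℝ) + 1 + (n + 3 : ℕ)) ^ 2) := by
    rw [integral_congr (g := fun x => 1 / ((k : ℝ) + 1) * (x ^ (n + k + 2) * (x * log x))
      - 1 / ((k : ℝ) + 1) * (x ^ (n + k + 1) * (x * log x))) fun x _ => by simp only [F]; ring]
    simp (disch := exact Continuous.intervalIntegrable (by fun_prop) _ _) only [integral_sub,
      integral_const_mul, integral_pow_mul_mul_log _ zero_le_one, log_one]
    push_cast
    field_simp
    ring
  have hIcc {x : ℝ} (hx : x ∈ Set.uIoc (0:ℝ) 1) : x ∈ Set.Icc (0:ℝ) 1 := by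
    rw [Set.uIoc_of_le zero_le_one] at hx
    exact Set.Ioc_subset_Icc_self hx
  have hlim := hasSum_integral_of_dominated_convergence (μ := MeasureTheory.volume) F
    (fun k => (hF_cont k).aestronglyMeasurable)
    (fun k => .of_forall fun x hx => (norm_of_nonneg (hF_nonneg k (hIcc hx))).le)
    (.of_forall fun x hx => (hF_sum (hIcc hx)).summable)
    ((Continuous.intervalIntegrable (by fun_prop) 0 1).congr
      fun x hx => (hF_sum (hIcc hx)).tsum_eq.symm)
    (.of_forall fun x hx => hF_sum (hIcc hx))
  refine hlim.unique ?_
  simp_rw [hF_integral]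
  exact (hasSum_one_div_mul_add_sq (by omega)).sub (hasSum_one_div_mul_add_sq (by omega))

theorem mul_mul_log_mul {t : ℝ} (ht : t ≠ 0) (v : ℝ) :
    t * v * log (t * v) = t * (v * log t + v * log v) := by
  rcases eq_or_ne v 0 with rfl | hv
  · simp
  · rw [log_mul ht hv]; ring

theorem integral_mul_log_mul_sub_mul_log {t : ℝ} (ht : 0 ≤ t) :
    ∫ u in (0:ℝ)..t, u * log u * ((t - u) * log (t - u)) =
      t ^ 3 * (log t ^ 2 / 6 - 5 * log t / 18 + 37 / 108 - π ^ 2 / 36) := by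
  rcases ht.eq_or_lt with rfl | ht
  · simp
  have h := smul_integral_comp_mul_left (a := 0) (b := 1)
    (fun u => u * log u * ((t - u) * log (t - u))) t
  simp only [mul_zero, mul_one, smul_eq_mul] at h
  -- Exponents `^ 0` and `^ 1` are written out here and below so that the integration lemmas match.
  rw [← h, integral_congr (g := fun v => t ^ 2 * (log t ^ 2 * v ^ 1 - log t ^ 2 * v ^ 2
      + log t * (v ^ 0 * (v * log v)) - log t * (v ^ 1 * (v * log v))
      + log t * ((1 - v) ^ 0 * ((1 - v) * log (1 - v)))
      - log t * ((1 - v) ^ 1 * ((1 - v) * log (1 - v)))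
      + v ^ 0 * (v * log v) * ((1 - v) * log (1 - v)))) fun v _ => by
    rw [mul_mul_log_mul ht.ne', show t - t * v = t * (1 - v) by ring, mul_mul_log_mul ht.ne']
    ring]
  simp (disch := exact Continuous.intervalIntegrable (by fun_prop) _ _) only [integral_add,
    integral_sub, integral_const_mul, integral_pow,
    integral_pow_mul_mul_log _ zero_le_one, integral_sub_pow_mul_mul_log _ zero_le_one,
    integral_pow_mul_mul_log_mul_one_sub_mul_log, log_one]
  norm_num [invMulSqSum, sum_range_succ]
  ring

noncomputable def innerSecondMoment (c k t : ℝ) : ℝ :=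
  c ^ 2 * t + c * t ^ 2 + (1 - 2 * c) * t ^ 3 / 3 - t ^ 4 / 2 + t ^ 5 / 5
    + 2 * k * ((2 * c + t - t ^ 2) * t ^ 2 * (log t / 2 - 1 / 4) + t ^ 4 * (log t / 6 - 7 / 72))
    + k ^ 2 * t ^ 3 * (log t ^ 2 - log t + 5 / 6 - π ^ 2 / 18)

theorem integral_sq_eq_innerSecondMoment (c k : ℝ) {t : ℝ} (ht : 0 ≤ t) :
    ∫ y in (0:ℝ)..t, (c + (1 - (t - y)) * (t - y) + k * (y * log y + (t - y) * log (t - y))) ^ 2 =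
      innerSecondMoment c k t := by
  have h := integral_comp_sub_left (a := 0) (b := t)
    (fun y => (c + (1 - (t - y)) * (t - y) + k * (y * log y + (t - y) * log (t - y))) ^ 2) t
  simp only [sub_sub_cancel, sub_self, sub_zero] at h
  rw [← h, integral_congr (g := fun u =>
      c ^ 2 + 2 * c * u ^ 1 + (1 - 2 * c) * u ^ 2 - 2 * u ^ 3 + u ^ 4
      + 2 * k * c * (u ^ 0 * (u * log u)) + 2 * k * (u ^ 1 * (u * log u))
      - 2 * k * (u ^ 2 * (u * log u))
      + 2 * k * (c + t - t ^ 2) * ((t - u) ^ 0 * ((t - u) * log (t - u)))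
      + 2 * k * (2 * t - 1) * ((t - u) ^ 1 * ((t - u) * log (t - u)))
      - 2 * k * ((t - u) ^ 2 * ((t - u) * log (t - u)))
      + k ^ 2 * (u ^ 0 * (u * log u) ^ 2) + k ^ 2 * ((t - u) ^ 0 * ((t - u) * log (t - u)) ^ 2)
      + 2 * k ^ 2 * (u * log u * ((t - u) * log (t - u)))) fun u _ => by ring]
  simp (disch := exact Continuous.intervalIntegrable (by fun_prop) _ _) only [integral_add,
    integral_sub, integral_const_mul, integral_const, integral_pow,
    integral_pow_mul_mul_log _ ht, integral_sub_pow_mul_mul_log _ ht,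
    integral_pow_mul_mul_log_sq _ ht, integral_sub_pow_mul_mul_log_sq _ ht,
    integral_mul_log_mul_sub_mul_log ht, smul_eq_mul]
  unfold innerSecondMoment
  push_cast
  ring

theorem integral_innerSecondMoment :
    ∫ x in (0:ℝ)..1, innerSecondMoment (x + 3 / 5 * (x * log x)) (3 / 5) (1 - x) =
      7 / 40 - 3 / 200 * π ^ 2 := by
  rw [integral_congr (g := fun x =>
      13 / 60 - x ^ 1 + 33 / 10 * x ^ 2 - 11 / 3 * x ^ 3 + 27 / 20 * x ^ 4 - 1 / 5 * x ^ 5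
      - π ^ 2 / 50 + 3 / 50 * π ^ 2 * x ^ 1 - 3 / 50 * π ^ 2 * x ^ 2 + π ^ 2 / 50 * x ^ 3
      - 4 / 25 * (x ^ 0 * (x * log x)) + 48 / 25 * (x ^ 1 * (x * log x))
      - 54 / 25 * (x ^ 2 * (x * log x)) + 2 / 5 * (x ^ 3 * (x * log x))
      + 9 / 25 * (x ^ 0 * (x * log x) ^ 2) - 9 / 25 * (x ^ 1 * (x * log x) ^ 2)
      + 6 / 5 * ((1 - x) ^ 1 * ((1 - x) * log (1 - x)))
      - 24 / 25 * ((1 - x) ^ 2 * ((1 - x) * log (1 - x)))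
      - 2 / 5 * ((1 - x) ^ 3 * ((1 - x) * log (1 - x)))
      + 9 / 25 * ((1 - x) ^ 1 * ((1 - x) * log (1 - x)) ^ 2)
      + 18 / 25 * (x ^ 0 * (x * log x) * ((1 - x) * log (1 - x)))
      - 18 / 25 * (x ^ 1 * (x * log x) * ((1 - x) * log (1 - x)))) fun x _ => by
    unfold innerSecondMoment; ring]
  simp (disch := exact Continuous.intervalIntegrable (by fun_prop) _ _) only [integral_add,
    integral_sub, integral_const_mul, integral_const, integral_pow,
    integral_pow_mul_mul_log _ zero_le_one, integral_sub_pow_mul_mul_log _ zero_le_one,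
    integral_pow_mul_mul_log_sq _ zero_le_one, integral_sub_pow_mul_mul_log_sq _ zero_le_one,
    integral_pow_mul_mul_log_mul_one_sub_mul_log, smul_eq_mul, log_one]
  norm_num [invMulSqSum, sum_range_succ]
  ring

/-- Second-moment integral for the swaps toll of Yaroslavskiy's Quicksort:
`2·E[(D₁ + (D₁+D₂)D₃ + (3/5)·Σ Dⱼ ln Dⱼ)²] = 7/10 − (3/50)π²`. -/
theorem swaps_variance_constant :
    2 * (∫ x in (0:ℝ)..1, ∫ y in (0:ℝ)..(1 - x),
        2 * (x + (x + y) * (1 - x - y) +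
            (3 / 5) * (x * Real.log x + y * Real.log y
              + (1 - x - y) * Real.log (1 - x - y))) ^ 2)
      = 7 / 10 - (3 / 50) * Real.pi ^ 2 := by
  have inner (x : ℝ) (hx : x ∈ Set.uIcc (0:ℝ) 1) :
      ∫ y in (0:ℝ)..(1 - x), 2 * (x + (x + y) * (1 - x - y) + (3 / 5) * (x * log x + y * log y
        + (1 - x - y) * log (1 - x - y))) ^ 2 =
      2 * innerSecondMoment (x + 3 / 5 * (x * log x)) (3 / 5) (1 - x) := by
    rw [Set.uIcc_of_le zero_le_one] at hx
    rw [integral_const_mul, ← integral_sq_eq_innerSecondMoment _ _ (sub_nonneg.2 hx.2)]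
    congr 1
    exact integral_congr fun y _ => by ring
  rw [integral_congr inner, integral_const_mul, integral_innerSecondMoment]
  ring
end

section
/- Let (V_1, …, V_b) be random probabilities (nonnegative, summing to 1 a.s.), let (L_1, …, L_b) be mixed multinomially distributed with n trials and success probabilities (V_1, …, V_b). Then for each i, (L_i/n)·ln(L_i/n) converges in L_2 to V_i·ln(V_i) as n → ∞ (with the convention x ln x = 0 at x = 0). -/
/-!
Conditionally on `V`, the count `Lᵢ` has factorial moments `E[(Lᵢ)ₖ | V] = (n)ₖ Vᵢᵏ`: in the
multinomial expansion of `(∑ v)ⁿ`, shifting `l` by `k • eᵢ` turns `(lᵢ)ₖ · multinomial l` into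
`(n)ₖ · multinomial (l - k • eᵢ)`. Hence `E[(Lᵢ - n Vᵢ)²] = n E[Vᵢ (1 - Vᵢ)] ≤ n / 4`, i.e.
`Lᵢ / n → Vᵢ` in `L²`. Since `f x = x log x` is uniformly continuous and bounded on `[0, 1]`, for
every `ε > 0` there is `C` with `(f x - f y)² ≤ ε + C (x - y)²` there, which carries the `L²`
convergence through `f`.
-/

open MeasureTheory Filter Finset

section Multinomial

variable {ι : Type*} [Fintype ι] [DecidableEq ι]

theorem Nat.descFactorial_mul_multinomial_add_single (l : ι → ℕ) (i : ι) (k : ℕ) :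
    (l i + k).descFactorial k * Nat.multinomial univ (l + Pi.single i k) =
      (∑ j, l j + k).descFactorial k * Nat.multinomial univ l := by
  set l' := l + Pi.single i k
  have hsum : ∑ j, l' j = ∑ j, l j + k := by
    simp [l', sum_add_distrib]
  have hrest : ∏ j ∈ univ.erase i, (l' j).factorial = ∏ j ∈ univ.erase i, (l j).factorial :=
    prod_congr rfl fun j hj => by simp [l', ne_of_mem_erase hj]
  have hpos : 0 < (l i).factorial * ∏ j ∈ univ.erase i, (l j).factorial := by positivity
  refine Nat.eq_of_mul_eq_mul_left hpos ?_
  calc ((l i).factorial * ∏ j ∈ univ.erase i, (l j).factorial) *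
        ((l i + k).descFactorial k * Nat.multinomial univ l')
      = (∏ j, (l' j).factorial) * Nat.multinomial univ l' := by
        rw [← mul_prod_erase univ _ (mem_univ i), hrest]
        simp only [l', Pi.add_apply, Pi.single_eq_same]
        rw [← Nat.factorial_mul_descFactorial (Nat.le_add_left k (l i)), Nat.add_sub_cancel]
        ring
    _ = (∑ j, l j + k).descFactorial k * ((∏ j, (l j).factorial) * Nat.multinomial univ l) := by
        rw [Nat.multinomial_spec, Nat.multinomial_spec, hsum,
          ← Nat.factorial_mul_descFactorial (Nat.le_add_left k _), Nat.add_sub_cancel]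
        ring
    _ = _ := by rw [← mul_prod_erase univ _ (mem_univ i)]; ring

theorem sum_piAntidiag_descFactorial_mul_multinomial {R : Type*} [CommSemiring R]
    (v : ι → R) (i : ι) (n k : ℕ) :
    ∑ l ∈ piAntidiag univ n, ((l i).descFactorial k * Nat.multinomial univ l : R) *
        ∏ j, v j ^ l j =
      n.descFactorial k * v i ^ k * (∑ j, v j) ^ (n - k) := by
  rcases lt_or_ge n k with hnk | hkn
  · have hle : ∀ l ∈ piAntidiag univ n, l i ≤ n := fun l hl =>
      (mem_piAntidiag.1 hl).1 ▸ single_le_sum (fun j _ => Nat.zero_le (l j)) (mem_univ i)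
    rw [Nat.descFactorial_of_lt hnk, Nat.cast_zero, zero_mul, zero_mul]
    exact sum_eq_zero fun l hl => by simp [Nat.descFactorial_of_lt ((hle l hl).trans_lt hnk)]
  obtain ⟨m, rfl⟩ := Nat.exists_eq_add_of_le' hkn
  set F : (ι → ℕ) → R := fun l => ((l i).descFactorial k * Nat.multinomial univ l : R) *
    ∏ j, v j ^ l j
  have hshift : ∀ l ∈ piAntidiag univ m, F (l + Pi.single i k) =
      (m + k).descFactorial k * v i ^ k * (Nat.multinomial univ l * ∏ j, v j ^ l j) := by
    intro l hl
    have hcoeff := Nat.descFactorial_mul_multinomial_add_single l i k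
    rw [(mem_piAntidiag.1 hl).1] at hcoeff
    simp only [F, Pi.add_apply, pow_add, prod_mul_distrib, Pi.single_apply, pow_ite, pow_zero,
      prod_ite_eq', mem_univ, if_true]
    rw [← Nat.cast_mul, hcoeff]
    push_cast
    ring
  rw [Nat.add_sub_cancel, sum_pow_eq_sum_piAntidiag, mul_sum, ← sum_congr rfl hshift]
  symm
  calc ∑ l ∈ piAntidiag univ m, F (l + Pi.single i k)
      = ∑ l ∈ (piAntidiag univ m).map (addRightEmbedding (Pi.single i k)), F l := by
        rw [sum_map]; rfl
    _ = ∑ l ∈ piAntidiag univ (m + k), F l := by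
      refine sum_subset (fun l hl => ?_) fun l hl hl' => ?_
      · obtain ⟨l', hl', rfl⟩ := mem_map.1 hl
        simpa [sum_add_distrib] using hl'
      · suffices l i < k by simp [F, Nat.descFactorial_of_lt this]
        by_contra! hki
        have hback : l - Pi.single i k + Pi.single i k = l := tsub_add_cancel_of_le fun j => by
          rcases eq_or_ne j i with rfl | hj <;> simp [*]
        refine hl' (mem_map.2 ⟨l - Pi.single i k, ?_, hback⟩)
        have hsum := congr_arg univ.sum hback
        simp [sum_add_distrib] at hsum hl ⊢
        omega

theorem sum_piAntidiag_multinomial_mul_sq_sub {R : Type*} [CommRing R] (v : ι → R)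
    (hv : ∑ j, v j = 1) (i : ι) (n : ℕ) :
    ∑ l ∈ piAntidiag univ n,
        (Nat.multinomial univ l * ∏ j, v j ^ l j : R) * ((l i : R) - n * v i) ^ 2 =
      n * v i * (1 - v i) := by
  have hmoment := sum_piAntidiag_descFactorial_mul_multinomial v i n
  simp only [hv, one_pow, mul_one] at hmoment
  have h0 := hmoment 0
  have h1 := hmoment 1
  have h2 := hmoment 2
  simp only [Nat.descFactorial_zero, Nat.descFactorial_one, Nat.cast_one, one_mul, pow_zero,
    pow_one, Nat.cast_descFactorial_two] at h0 h1 h2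
  calc _ = ∑ l ∈ piAntidiag univ n, (((l i : R) * (l i - 1) * Nat.multinomial univ l) *
          ∏ j, v j ^ l j + (1 - 2 * n * v i) * ((l i * Nat.multinomial univ l) * ∏ j, v j ^ l j) +
          (n * v i) ^ 2 * (Nat.multinomial univ l * ∏ j, v j ^ l j)) :=
        sum_congr rfl fun l _ => by ring
    _ = n * v i * (1 - v i) := by
        rw [sum_add_distrib, sum_add_distrib, ← mul_sum, ← mul_sum, h0, h1, h2]
        ring

end Multinomial

theorem MeasureTheory.integral_condExp_mul_of_bound {Ω : Type*} {m m₀ : MeasurableSpace Ω}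
    {μ : Measure Ω} [IsFiniteMeasure μ] (hm : m ≤ m₀) {f g : Ω → ℝ} (hf : Integrable f μ)
    (hg : StronglyMeasurable[m] g) (c : ℝ) (hgc : ∀ᵐ ω ∂μ, ‖g ω‖ ≤ c) :
    ∫ ω, μ[f|m] ω * g ω ∂μ = ∫ ω, f ω * g ω ∂μ := by
  simp_rw [mul_comm _ (g _)]
  calc ∫ ω, g ω * μ[f|m] ω ∂μ = ∫ ω, μ[g * f|m] ω ∂μ :=
        integral_congr_ae (condExp_stronglyMeasurable_mul_of_bound hm hg hf c hgc).symm
    _ = ∫ ω, g ω * f ω ∂μ := integral_condExp hm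

theorem Measurable.integrable_ite_eq {Ω α : Type*} [MeasurableSpace Ω] {μ : Measure Ω}
    [IsFiniteMeasure μ] [MeasurableSpace α] [MeasurableSingletonClass α] [DecidableEq α]
    {X : Ω → α} (hX : Measurable X) (a : α) :
    Integrable (fun ω => if X ω = a then (1 : ℝ) else 0) μ := by
  refine .of_bound (Measurable.ite (hX (measurableSet_singleton a)) measurable_const
    measurable_const).aestronglyMeasurable 1 (ae_of_all _ fun ω => ?_)
  split_ifs <;> simp

section MixedMultinomial

variable {ι : Type*} [Fintype ι]

theorem mem_Icc_of_nonneg_of_sum_eq_one {v : ι → ℝ} (h0 : ∀ j, 0 ≤ v j) (h1 : ∑ j, v j = 1)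
    (i : ι) : v i ∈ Set.Icc 0 1 :=
  ⟨h0 i, h1 ▸ single_le_sum (fun j _ => h0 j) (mem_univ i)⟩

noncomputable def multinomialWeight (n : ℕ) (v : ι → ℝ) (l : ι → ℕ) : ℝ :=
  if ∑ i, l i = n then (Nat.multinomial univ l : ℝ) * ∏ i, v i ^ l i else 0

def IsCondMultinomial {Ω : Type*} [MeasurableSpace Ω] (μ : Measure Ω) (V : Ω → ι → ℝ)
    (L : Ω → ι → ℕ) (n : ℕ) : Prop :=
  ∀ l : ι → ℕ, μ[fun ω => if L ω = l then (1 : ℝ) else 0 | MeasurableSpace.comap V inferInstance]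
    =ᵐ[μ] fun ω => multinomialWeight n (V ω) l

namespace IsCondMultinomial

variable {Ω : Type*} [MeasurableSpace Ω] {μ : Measure Ω} {V : Ω → ι → ℝ} {L : Ω → ι → ℕ}
  {n : ℕ}

theorem integrable_multinomialWeight_mul (hL : IsCondMultinomial μ V L n) (hV : Measurable V)
    (l : ι → ℕ) {h : (ι → ℝ) → ℝ} (hh : Measurable h) {C : ℝ}
    (hC : ∀ᵐ ω ∂μ, ‖h (V ω)‖ ≤ C) :
    Integrable (fun ω => multinomialWeight n (V ω) l * h (V ω)) μ :=
  (integrable_condExp.mul_bdd (hh.comp hV).aestronglyMeasurable hC).congr <| by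
    filter_upwards [hL l] with ω hω
    rw [hω, Function.comp_apply]

variable [IsFiniteMeasure μ]

theorem ae_sum_eq (hL : IsCondMultinomial μ V L n) (hV : Measurable V) (hLm : Measurable L) :
    ∀ᵐ ω ∂μ, ∑ j, L ω j = n := by
  suffices ∀ᵐ ω ∂μ, ∀ l : ι → ℕ, L ω = l → ∑ j, l j = n by
    filter_upwards [this] with ω hω using hω _ rfl
  refine ae_all_iff.2 fun l => ?_
  by_cases hl : ∑ j, l j = n
  · exact ae_of_all _ fun _ _ => hl
  have hzero : ∫ ω, (if L ω = l then (1 : ℝ) else 0) ∂μ = 0 := by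
    rw [← integral_condExp hV.comap_le, integral_congr_ae (hL l)]
    simp [multinomialWeight, hl]
  filter_upwards [(integral_eq_zero_iff_of_nonneg (fun ω => by positivity)
    (hLm.integrable_ite_eq l)).1 hzero] with ω hω hLl
  simp [hLl] at hω

theorem integral_ite_mul (hL : IsCondMultinomial μ V L n) (hV : Measurable V)
    (hLm : Measurable L) (l : ι → ℕ) {h : (ι → ℝ) → ℝ} (hh : Measurable h) {C : ℝ}
    (hC : ∀ᵐ ω ∂μ, ‖h (V ω)‖ ≤ C) :
    ∫ ω, (if L ω = l then (1 : ℝ) else 0) * h (V ω) ∂μ =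
      ∫ ω, multinomialWeight n (V ω) l * h (V ω) ∂μ := by
  have hhV : StronglyMeasurable[MeasurableSpace.comap V inferInstance] (fun ω => h (V ω)) :=
    (hh.comp (comap_measurable V)).stronglyMeasurable
  rw [← integral_condExp_mul_of_bound hV.comap_le (hLm.integrable_ite_eq l) hhV C hC]
  refine integral_congr_ae ?_
  filter_upwards [hL l] with ω hω
  rw [hω]

variable [DecidableEq ι]

theorem integral_comp_eq_integral_sum (hL : IsCondMultinomial μ V L n) (hV : Measurable V)
    (hLm : Measurable L) (G : (ι → ℕ) → (ι → ℝ) → ℝ) (hG : ∀ l, Measurable (G l))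
    (hGb : ∀ l, ∃ C, ∀ᵐ ω ∂μ, ‖G l (V ω)‖ ≤ C) :
    ∫ ω, G (L ω) (V ω) ∂μ =
      ∫ ω, ∑ l ∈ piAntidiag univ n, multinomialWeight n (V ω) l * G l (V ω) ∂μ := by
  choose C hC using hGb
  have hind : ∀ l, Integrable (fun ω => (if L ω = l then (1 : ℝ) else 0) * G l (V ω)) μ :=
    fun l => (hLm.integrable_ite_eq l).mul_bdd ((hG l).comp hV).aestronglyMeasurable (hC l)
  calc ∫ ω, G (L ω) (V ω) ∂μ
      = ∫ ω, ∑ l ∈ piAntidiag univ n, (if L ω = l then (1 : ℝ) else 0) * G l (V ω) ∂μ := by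
        refine integral_congr_ae ?_
        filter_upwards [hL.ae_sum_eq hV hLm] with ω hω
        simp [ite_mul, hω]
    _ = ∫ ω, ∑ l ∈ piAntidiag univ n, multinomialWeight n (V ω) l * G l (V ω) ∂μ := by
        rw [integral_finsetSum _ fun l _ => hind l,
          integral_finsetSum _ fun l _ => hL.integrable_multinomialWeight_mul hV l (hG l) (hC l)]
        exact sum_congr rfl fun l _ => hL.integral_ite_mul hV hLm l (hG l) (hC l)

end IsCondMultinomial

namespace IsCondMultinomial

variable [DecidableEq ι] {Ω : Type*} [MeasurableSpace Ω] {μ : Measure Ω} [IsProbabilityMeasure μ]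
  {V : Ω → ι → ℝ} {L : Ω → ι → ℕ} {n : ℕ}

theorem integral_sq_sub_le (hL : IsCondMultinomial μ V L n) (hV : Measurable V)
    (hLm : Measurable L) (hV0 : ∀ᵐ ω ∂μ, ∀ j, 0 ≤ V ω j) (hV1 : ∀ᵐ ω ∂μ, ∑ j, V ω j = 1)
    (i : ι) : ∫ ω, ((L ω i : ℝ) - n * V ω i) ^ 2 ∂μ ≤ n / 4 := by
  have hVi : ∀ᵐ ω ∂μ, V ω i ∈ Set.Icc 0 1 := by
    filter_upwards [hV0, hV1] with ω h0 h1 using mem_Icc_of_nonneg_of_sum_eq_one h0 h1 i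
  have hG : ∀ l : ι → ℕ, Measurable fun v : ι → ℝ => ((l i : ℝ) - n * v i) ^ 2 := by fun_prop
  have hGb : ∀ l : ι → ℕ, ∃ C, ∀ᵐ ω ∂μ, ‖((l i : ℝ) - n * V ω i) ^ 2‖ ≤ C := by
    refine fun l => ⟨((l i : ℝ) + n) ^ 2, ?_⟩
    filter_upwards [hVi] with ω ⟨h0, h1⟩
    have hl : (0 : ℝ) ≤ l i := Nat.cast_nonneg _
    have hn : (0 : ℝ) ≤ n := Nat.cast_nonneg _
    rw [Real.norm_eq_abs, abs_sq, sq_le_sq, abs_of_nonneg (add_nonneg hl hn), abs_le]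
    constructor <;> nlinarith
  calc ∫ ω, ((L ω i : ℝ) - n * V ω i) ^ 2 ∂μ
      = ∫ ω, n * V ω i * (1 - V ω i) ∂μ := by
        rw [hL.integral_comp_eq_integral_sum hV hLm _ hG hGb]
        refine integral_congr_ae ?_
        filter_upwards [hV1] with ω hω
        rw [← sum_piAntidiag_multinomial_mul_sq_sub (V ω) hω i n]
        refine sum_congr rfl fun l hl => ?_
        rw [multinomialWeight, if_pos (mem_piAntidiag.1 hl).1]
    _ ≤ ∫ _, (n / 4 : ℝ) ∂μ := by
        refine integral_mono_of_nonneg ?_ (integrable_const _) ?_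
        · filter_upwards [hVi] with ω ⟨h0, h1⟩
          have := sub_nonneg.2 h1
          positivity
        · filter_upwards with ω
          nlinarith [sq_nonneg (2 * V ω i - 1), (n.cast_nonneg : (0 : ℝ) ≤ n)]
    _ = n / 4 := by simp

theorem integral_sq_div_sub_le (hL : IsCondMultinomial μ V L n) (hV : Measurable V)
    (hLm : Measurable L) (hV0 : ∀ᵐ ω ∂μ, ∀ j, 0 ≤ V ω j) (hV1 : ∀ᵐ ω ∂μ, ∑ j, V ω j = 1)
    (i : ι) (hn : n ≠ 0) : ∫ ω, ((L ω i : ℝ) / n - V ω i) ^ 2 ∂μ ≤ 1 / (4 * n) := by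
  have hn' : (0 : ℝ) < n := Nat.cast_pos.2 (Nat.pos_of_ne_zero hn)
  have hscale : ∀ ω, ((L ω i : ℝ) / n - V ω i) ^ 2 = ((L ω i : ℝ) - n * V ω i) ^ 2 / n ^ 2 :=
    fun ω => by field_simp
  simp_rw [hscale, integral_div]
  rw [div_le_iff₀ (by positivity)]
  calc _ ≤ (n / 4 : ℝ) := hL.integral_sq_sub_le hV hLm hV0 hV1 i
    _ = 1 / (4 * n) * n ^ 2 := by field_simp

end IsCondMultinomial

end MixedMultinomial

theorem IsCompact.exists_sq_sub_le_add_mul_sq {f : ℝ → ℝ} {s : Set ℝ} (hs : IsCompact s)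
    (hf : ContinuousOn f s) {ε : ℝ} (hε : 0 < ε) :
    ∃ C, ∀ x ∈ s, ∀ y ∈ s, (f x - f y) ^ 2 ≤ ε + C * (x - y) ^ 2 := by
  obtain ⟨δ, hδ, hfδ⟩ := Metric.uniformContinuousOn_iff.1
    (hs.uniformContinuousOn_of_continuous hf) (√ε) (Real.sqrt_pos.2 hε)
  obtain ⟨M, hM⟩ := hs.exists_bound_of_continuousOn hf
  refine ⟨(2 * M) ^ 2 / δ ^ 2, fun x hx y hy => ?_⟩
  rcases lt_or_ge |x - y| δ with hxy | hxy
  · have hclose : (f x - f y) ^ 2 < ε := by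
      have hsq := hfδ x hx y hy hxy
      rw [Real.dist_eq] at hsq
      calc (f x - f y) ^ 2 = |f x - f y| ^ 2 := (sq_abs _).symm
        _ < √ε ^ 2 := pow_lt_pow_left₀ hsq (abs_nonneg _) two_ne_zero
        _ = ε := Real.sq_sqrt hε.le
    have : 0 ≤ (2 * M) ^ 2 / δ ^ 2 * (x - y) ^ 2 := by positivity
    linarith
  · have hbound : (f x - f y) ^ 2 ≤ (2 * M) ^ 2 := by
      have hx' := hM x hx
      have hy' := hM y hy
      rw [Real.norm_eq_abs] at hx' hy'
      rw [← sq_abs]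
      exact pow_le_pow_left₀ (abs_nonneg _) ((abs_sub _ _).trans (by linarith)) 2
    have hfar : (2 * M) ^ 2 ≤ (2 * M) ^ 2 / δ ^ 2 * (x - y) ^ 2 := by
      rw [div_mul_eq_mul_div, le_div_iff₀ (by positivity)]
      exact mul_le_mul_of_nonneg_left (by simpa using pow_le_pow_left₀ hδ.le hxy 2)
        (sq_nonneg _)
    linarith


section L2

variable {Ω : Type*} [MeasurableSpace Ω] {μ : Measure Ω} [IsFiniteMeasure μ]
  {f : ℝ → ℝ} {s : Set ℝ}

theorem integral_sq_sub_comp_le {ε C : ℝ}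
    (hfC : ∀ x ∈ s, ∀ y ∈ s, (f x - f y) ^ 2 ≤ ε + C * (x - y) ^ 2) {X Y : Ω → ℝ}
    (hXs : ∀ᵐ ω ∂μ, X ω ∈ s) (hYs : ∀ᵐ ω ∂μ, Y ω ∈ s)
    (hXY : Integrable (fun ω => (X ω - Y ω) ^ 2) μ) :
    ∫ ω, (f (X ω) - f (Y ω)) ^ 2 ∂μ ≤ ε * μ.real Set.univ + C * ∫ ω, (X ω - Y ω) ^ 2 ∂μ := by
  calc ∫ ω, (f (X ω) - f (Y ω)) ^ 2 ∂μ ≤ ∫ ω, (ε + C * (X ω - Y ω) ^ 2) ∂μ :=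
        integral_mono_of_nonneg (ae_of_all _ fun _ => sq_nonneg _)
          ((integrable_const ε).add (hXY.const_mul C))
          (by filter_upwards [hXs, hYs] with ω hx hy using hfC _ hx _ hy)
    _ = ε * μ.real Set.univ + C * ∫ ω, (X ω - Y ω) ^ 2 ∂μ := by
        rw [integral_add (integrable_const ε) (hXY.const_mul C), integral_const,
          integral_const_mul, smul_eq_mul, mul_comm]

theorem tendsto_integral_sq_sub_comp (hf : Continuous f) (hs : IsCompact s)
    {X : ℕ → Ω → ℝ} {Y : Ω → ℝ} (hX : ∀ n, AEStronglyMeasurable (X n) μ)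
    (hY : AEStronglyMeasurable Y μ) (hXs : ∀ n, ∀ᵐ ω ∂μ, X n ω ∈ s) (hYs : ∀ᵐ ω ∂μ, Y ω ∈ s)
    (hXY : Tendsto (fun n => ∫ ω, (X n ω - Y ω) ^ 2 ∂μ) atTop (nhds 0)) :
    Tendsto (fun n => ∫ ω, (f (X n ω) - f (Y ω)) ^ 2 ∂μ) atTop (nhds 0) := by
  obtain ⟨D, hD⟩ := Metric.isBounded_iff.1 hs.isBounded
  have hint : ∀ n, Integrable (fun ω => (X n ω - Y ω) ^ 2) μ := fun n =>
    .of_bound (((hX n).sub hY).pow 2) (D ^ 2) <| by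
      filter_upwards [hXs n, hYs] with ω hx hy
      rw [Real.norm_eq_abs, abs_sq, ← sq_abs]
      exact pow_le_pow_left₀ (abs_nonneg _) (hD hx hy) 2
  refine tendsto_order.2 ⟨fun a ha => Eventually.of_forall fun n =>
    ha.trans_le (integral_nonneg fun _ => sq_nonneg _), fun a ha => ?_⟩
  set m := μ.real Set.univ
  have hε : 0 < a / (m + 1) := by positivity
  have hεa : a / (m + 1) * m < a := by
    rw [div_mul_eq_mul_div, div_lt_iff₀ (by positivity)]
    nlinarith
  obtain ⟨C, hC⟩ := hs.exists_sq_sub_le_add_mul_sq hf.continuousOn hε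
  have hlim : Tendsto (fun n => a / (m + 1) * m + C * ∫ ω, (X n ω - Y ω) ^ 2 ∂μ) atTop
      (nhds (a / (m + 1) * m)) := by
    simpa using tendsto_const_nhds.add (hXY.const_mul C)
  filter_upwards [hlim.eventually (gt_mem_nhds hεa)] with n hn
  exact (integral_sq_sub_comp_le hC (hXs n) hYs (hint n)).trans_lt hn

end L2

/-- Let `(V₁,…,V_b)` be random probabilities and `(L₁,…,L_b)` be mixed multinomially
distributed with `n` trials and success probabilities `V` (stated via the conditional
expectation given `σ(V)` of indicators). Then for each `i`,
`(Lᵢ/n)·ln(Lᵢ/n) → Vᵢ·ln(Vᵢ)` in `L₂` as `n → ∞` (with `x ln x = 0` at `x = 0`). -/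
theorem mixed_multinomial_xlnx_L2 {Ω : Type*} [MeasurableSpace Ω]
    (μ : Measure Ω) [IsProbabilityMeasure μ]
    (b : ℕ) (V : Ω → Fin b → ℝ) (L : ℕ → Ω → Fin b → ℕ)
    (hVmeas : Measurable V) (hLmeas : ∀ n, Measurable (L n))
    (hVnonneg : ∀ᵐ ω ∂μ, ∀ i, 0 ≤ V ω i)
    (hVsum : ∀ᵐ ω ∂μ, ∑ i, V ω i = 1)
    (hcond : ∀ (n : ℕ) (l : Fin b → ℕ),
      μ[(fun ω => if L n ω = l then (1 : ℝ) else 0) |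
          MeasurableSpace.comap V inferInstance]
        =ᵐ[μ] fun ω =>
          if ∑ i, l i = n then
            (Nat.multinomial Finset.univ l : ℝ) * ∏ i, V ω i ^ l i
          else 0) :
    ∀ i : Fin b,
      Tendsto (fun n : ℕ =>
          ∫ ω, ((L n ω i : ℝ) / n * Real.log ((L n ω i : ℝ) / n)
              - V ω i * Real.log (V ω i)) ^ 2 ∂μ)
        atTop (nhds 0) := by
  intro i
  have hL : ∀ n, IsCondMultinomial μ V (L n) n := hcond
  have hVi : ∀ᵐ ω ∂μ, V ω i ∈ Set.Icc 0 1 := by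
    filter_upwards [hVnonneg, hVsum] with ω h0 h1 using mem_Icc_of_nonneg_of_sum_eq_one h0 h1 i
  have hLi : ∀ n : ℕ, ∀ᵐ ω ∂μ, (L n ω i : ℝ) / n ∈ Set.Icc 0 1 := fun n => by
    filter_upwards [(hL n).ae_sum_eq hVmeas (hLmeas n)] with ω hω
    have hle : L n ω i ≤ n := (single_le_sum (fun j _ => Nat.zero_le _) (mem_univ i)).trans hω.le
    exact ⟨by positivity, div_le_one_of_le₀ (by exact_mod_cast hle) n.cast_nonneg⟩
  have hL2 : Tendsto (fun n : ℕ => ∫ ω, ((L n ω i : ℝ) / n - V ω i) ^ 2 ∂μ) atTop (nhds 0) := by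
    have hbound : Tendsto (fun n : ℕ => 1 / (4 * (n : ℝ))) atTop (nhds 0) := by
      simpa only [div_div] using tendsto_const_div_atTop_nhds_zero_nat (1 / 4 : ℝ)
    refine squeeze_zero' (Eventually.of_forall fun n => integral_nonneg fun _ => sq_nonneg _)
      ?_ hbound
    filter_upwards [eventually_ne_atTop 0] with n hn using
      (hL n).integral_sq_div_sub_le hVmeas (hLmeas n) hVnonneg hVsum i hn
  exact tendsto_integral_sq_sub_comp Real.continuous_mul_log isCompact_Icc
    (fun n => by have := hLmeas n; fun_prop) (by fun_prop) hLi hVi hL2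
end
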